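/- arXiv:1103.5430 — 5 statements merged into one kernel-verified Lean document; each statement's English description precedes it below -/
import Mathlib

section
/- For every nonnegative integer n, every integer m, and every nonnegative integer p, Σ_{k=0}^n k^p H_k^{(m)} = H_n^{(−p)} H_n^{(m)} + H_n^{(m−p)} − (1/(p+1)) Σ_{k=1}^{p+1} C(p+1, k) B⁺_{p−k+1} H_n^{(m−k)}, with the convention 0^0 = 1. -/
/-! Induction on `n`: going from `n` to `n + 1` adds `(n+1)^p H_{n+1}^{(m)}` on the left, and on the
right the increments of the three terms cancel down to the same quantity once the new Bernoulli
correction `(n+1)^{-m} (1/(p+1)) Σ_k C(p+1,k) B⁺_{p+1-k} (n+1)^k` is recognised, by Faulhaber's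
formula, as `(n+1)^{-m} H_{n+1}^{(-p)}`. -/

/-- Generalized harmonic number `H n m = ∑_{k=1}^n 1/k^m` (order `m : ℤ`), as a rational. -/
def H (n : ℕ) (m : ℤ) : ℚ := ∑ k ∈ Finset.range n, ((k : ℚ) + 1) ^ (-m)

open Finset

lemma H_zero (m : ℤ) : H 0 m = 0 := sum_range_zero _

lemma H_succ (n : ℕ) (m : ℤ) : H (n + 1) m = H n m + ((n : ℚ) + 1) ^ (-m) :=
  sum_range_succ _ _

lemma H_neg_natCast (n p : ℕ) : H n (-(p : ℤ)) = ∑ k ∈ Ico 1 (n + 1), (k : ℚ) ^ p := by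
  rw [H, sum_Ico_eq_sum_range, add_tsub_cancel_right]
  refine sum_congr rfl fun k _ => ?_
  rw [neg_neg, zpow_natCast]
  push_cast
  ring

lemma H_succ_sub_natCast (n : ℕ) (m : ℤ) (k : ℕ) :
    H (n + 1) (m - k) = H n (m - k) + ((n : ℚ) + 1) ^ (-m) * ((n : ℚ) + 1) ^ k := by
  have hx : (n : ℚ) + 1 ≠ 0 := by positivity
  rw [H_succ, ← zpow_natCast, ← zpow_add₀ hx]
  ring_nf

lemma H_succ_neg_natCast (n p : ℕ) :
    H (n + 1) (-(p : ℤ)) = H n (-(p : ℤ)) + ((n : ℚ) + 1) ^ p := by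
  rw [H_succ, neg_neg, zpow_natCast]

lemma sum_mul_H_succ_sub_natCast (s : Finset ℕ) (c : ℕ → ℚ) (n : ℕ) (m : ℤ) :
    ∑ k ∈ s, c k * H (n + 1) (m - k)
      = ∑ k ∈ s, c k * H n (m - k) + ((n : ℚ) + 1) ^ (-m) * ∑ k ∈ s, c k * ((n : ℚ) + 1) ^ k := by
  rw [mul_sum, ← sum_add_distrib]
  refine sum_congr rfl fun k _ => ?_
  rw [H_succ_sub_natCast]
  ring

/-- Faulhaber's formula, indexed by the power of `n`. -/
lemma H_neg_natCast_eq_sum_bernoulli' (n p : ℕ) :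
    H n (-(p : ℤ)) = (1 / ((p : ℚ) + 1)) * ∑ k ∈ Icc 1 (p + 1),
      ((p + 1).choose k : ℚ) * bernoulli' (p + 1 - k) * (n : ℚ) ^ k := by
  rw [H_neg_natCast, sum_Ico_pow, mul_sum]
  refine sum_nbij' (fun i => p + 1 - i) (fun k => p + 1 - k) ?_ ?_ ?_ ?_ ?_
  · intro i hi; simp only [mem_range, mem_Icc] at hi ⊢; omega
  · intro k hk; simp only [mem_range, mem_Icc] at hk ⊢; omega
  · intro i hi; simp only [mem_range] at hi; omega
  · intro k hk; simp only [mem_Icc] at hk; omega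
  · intro i hi
    have hi : i ≤ p + 1 := by simp only [mem_range] at hi; omega
    rw [Nat.choose_symm hi, Nat.sub_sub_self hi]
    ring

theorem sum_pow_mul_harmonic (n : ℕ) (m : ℤ) (p : ℕ) :
    ∑ k ∈ Finset.range (n + 1), (k : ℚ) ^ p * H k m
      = H n (-(p : ℤ)) * H n m + H n (m - p)
        - (1 / ((p : ℚ) + 1)) * ∑ k ∈ Finset.Icc 1 (p + 1),
            ((p + 1).choose k : ℚ) * bernoulli' (p + 1 - k) * H n (m - k) := by
  induction n with
  | zero => simp [H_zero]
  | succ n ih =>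
    have faulhaber := H_neg_natCast_eq_sum_bernoulli' (n + 1) p
    rw [H_succ_neg_natCast] at faulhaber
    push_cast at faulhaber
    rw [sum_range_succ, ih, sum_mul_H_succ_sub_natCast, H_succ_neg_natCast, H_succ_sub_natCast,
      H_succ n m]
    push_cast
    linear_combination -((n : ℚ) + 1) ^ (-m) * faulhaber
end

section
/- For every nonnegative integer n, every integer m, and every nonnegative integer p, Σ_{k=0}^n k^p H_{n−k}^{(m)} = H_n^{(−p)} H_n^{(m)} + δ_{p,0} H_n^{(m)} + (1/(p+1)) Σ_{k=1}^{p+1} (−1)^k C(p+1,k) [B⁺_{p−k+1} + (p−k+1) H_n^{(k−p)}] H_n^{(m−k)}, with the convention 0^0 = 1. -/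
open Finset

theorem sum_range_mul_sum_range_sub {R : Type*} [CommSemiring R] (f g : ℕ → R) (n : ℕ) :
    ∑ k ∈ range (n + 1), f k * ∑ j ∈ range (n - k), g j
      = ∑ j ∈ range n, g j * ∑ k ∈ range (n - j), f k := by
  simp only [mul_sum]
  rw [sum_comm' (t' := range n) (s' := fun j => range (n - j))
    (fun k j => by simp only [mem_range]; omega)]
  exact sum_congr rfl fun _ _ => sum_congr rfl fun _ _ => mul_comm _ _

theorem sum_Icc_one_eq_sum_range_sub {M : Type*} [AddCommGroup M] (f : ℕ → M) (n : ℕ) :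
    ∑ k ∈ Icc 1 n, f k = ∑ k ∈ range (n + 1), f k - f 0 := by
  rw [sum_range_succ', add_sub_cancel_right, ← Ico_add_one_right_eq_Icc, sum_Ico_eq_sum_range,
    Nat.add_sub_cancel]
  simp only [add_comm 1]

theorem sum_range_cast_sub_pow (n p j : ℕ) (hj : j < n) :
    ∑ i ∈ range n, ((i : ℚ) - j) ^ p
      = ∑ k ∈ range (n - j), (k : ℚ) ^ p - 0 ^ p
        + (-1) ^ p * ∑ t ∈ range (j + 1), (t : ℚ) ^ p := by
  obtain ⟨r, rfl⟩ : ∃ r, n = j + 1 + r := ⟨n - (j + 1), by omega⟩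
  have hsub : j + 1 + r - j = r + 1 := by omega
  have hleft : ∑ i ∈ range (j + 1), ((i : ℚ) - j) ^ p
      = (-1) ^ p * ∑ t ∈ range (j + 1), (t : ℚ) ^ p := by
    rw [← sum_range_reflect, mul_sum]
    refine sum_congr rfl fun i hi => ?_
    rw [← neg_pow, Nat.add_sub_cancel, Nat.cast_sub (Nat.lt_add_one_iff.1 (mem_range.1 hi))]
    ring
  have hshift : ∀ t : ℕ, ((j + 1 + t : ℕ) : ℚ) - j = ((t + 1 : ℕ) : ℚ) := fun t => by
    push_cast; ring
  rw [sum_range_add, hleft, hsub, sum_range_succ' (fun k => (k : ℚ) ^ p) r]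
  simp only [hshift, Nat.cast_zero]
  ring

namespace H

theorem sub_natCast (n : ℕ) (m : ℤ) (k : ℕ) :
    H n (m - k) = ∑ j ∈ range n, ((j : ℚ) + 1) ^ (-m) * ((j : ℚ) + 1) ^ k := by
  refine sum_congr rfl fun j _ => ?_
  rw [neg_sub, sub_eq_neg_add, zpow_add₀ (by positivity), zpow_natCast]

theorem natCast_sub (n : ℕ) {k p : ℕ} (hk : k ≤ p) :
    H n ((k : ℤ) - p) = ∑ i ∈ range n, ((i : ℚ) + 1) ^ (p - k) := by
  refine sum_congr rfl fun i _ => ?_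
  rw [neg_sub, ← Nat.cast_sub hk, zpow_natCast]

theorem sum_zpow_mul_sum_pow (n : ℕ) (m : ℤ) (s : Finset ℕ) (c : ℕ → ℚ) :
    ∑ j ∈ range n, ((j : ℚ) + 1) ^ (-m) * ∑ k ∈ s, c k * ((j : ℚ) + 1) ^ k
      = ∑ k ∈ s, c k * H n (m - k) := by
  simp only [sub_natCast, mul_sum]
  rw [sum_comm]
  exact sum_congr rfl fun _ _ => sum_congr rfl fun _ _ => by ring

theorem sum_add_one_sub_pow (n p : ℕ) (x : ℚ) :
    ∑ i ∈ range n, ((i : ℚ) + 1 - x) ^ p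
      = ∑ k ∈ range (p + 1), (-1) ^ k * (p.choose k : ℚ) * H n ((k : ℤ) - p) * x ^ k := by
  have hexpand : ∀ i : ℕ, ((i : ℚ) + 1 - x) ^ p
      = ∑ k ∈ range (p + 1),
          (-1) ^ k * x ^ k * ((i : ℚ) + 1) ^ (p - k) * (p.choose k : ℚ) := by
    intro i
    rw [sub_eq_neg_add, add_pow]
    simp only [neg_pow x]
  simp only [hexpand]
  rw [sum_comm]
  refine sum_congr rfl fun k hk => ?_
  rw [natCast_sub n (mem_range_succ_iff.1 hk), mul_sum, sum_mul]
  exact sum_congr rfl fun _ _ => by ring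

end H

theorem sum_Icc_bernoulli'_mul_pow (p N : ℕ) :
    ∑ k ∈ Icc 1 (p + 1),
        (-1 : ℚ) ^ k * ((p + 1).choose k : ℚ) * bernoulli' (p + 1 - k) * (N : ℚ) ^ k
      = (-1) ^ (p + 1) * (((p : ℚ) + 1) * ∑ t ∈ range N, (t : ℚ) ^ p) := by
  rw [sum_range_pow, mul_sum, mul_sum]
  refine sum_nbij' (fun k => p + 1 - k) (fun i => p + 1 - i) ?_ ?_ ?_ ?_ fun k hk => ?_
  iterate 4 · intro k hk; simp only [mem_Icc, mem_range] at hk ⊢; omega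
  rw [mem_Icc] at hk
  have hsign : (-1 : ℚ) ^ (p + 1) = (-1) ^ (p + 1 - k) * (-1) ^ k := by
    rw [← pow_add, Nat.sub_add_cancel hk.2]
  rw [Nat.sub_sub_self hk.2, Nat.choose_symm hk.2, bernoulli'_eq_bernoulli, hsign]
  field_simp

theorem sum_range_pow_sub_eq_harmonic_poly (n p j : ℕ) (hj : j < n) :
    ∑ k ∈ range (n - j), (k : ℚ) ^ p
      = H n (-(p : ℤ)) + 0 ^ p + (1 / ((p : ℚ) + 1)) * ∑ k ∈ Icc 1 (p + 1),
          (-1 : ℚ) ^ k * ((p + 1).choose k : ℚ)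
            * (bernoulli' (p + 1 - k) + ((p + 1 - k : ℕ) : ℚ) * H n ((k : ℤ) - p))
            * ((j : ℚ) + 1) ^ k := by
  have hchoose : ∀ k, ((p + 1).choose k : ℚ) * ((p + 1 - k : ℕ) : ℚ)
      = (p.choose k : ℚ) * (p + 1) := fun k => by exact_mod_cast (Nat.choose_mul_succ_eq p k).symm
  have hsplit : ∑ k ∈ Icc 1 (p + 1), (-1 : ℚ) ^ k * ((p + 1).choose k : ℚ)
        * (bernoulli' (p + 1 - k) + ((p + 1 - k : ℕ) : ℚ) * H n ((k : ℤ) - p))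
        * ((j : ℚ) + 1) ^ k
      = ∑ k ∈ Icc 1 (p + 1),
            (-1 : ℚ) ^ k * ((p + 1).choose k : ℚ) * bernoulli' (p + 1 - k) * ((j : ℚ) + 1) ^ k
        + ((p : ℚ) + 1) * ∑ k ∈ Icc 1 (p + 1),
            (-1) ^ k * (p.choose k : ℚ) * H n ((k : ℤ) - p) * ((j : ℚ) + 1) ^ k := by
    rw [mul_sum, ← sum_add_distrib]
    refine sum_congr rfl fun k _ => ?_
    linear_combination ((-1) ^ k * H n ((k : ℤ) - p) * ((j : ℚ) + 1) ^ k) * hchoose k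
  have hbinom : ∑ k ∈ Icc 1 (p + 1),
        (-1) ^ k * (p.choose k : ℚ) * H n ((k : ℤ) - p) * ((j : ℚ) + 1) ^ k
      = ∑ i ∈ range n, ((i : ℚ) - j) ^ p - H n (-(p : ℤ)) := by
    rw [sum_Icc_one_eq_sum_range_sub, sum_range_succ, ← H.sum_add_one_sub_pow n p ((j : ℚ) + 1)]
    simp [Nat.choose_succ_self]
  have hfaulhaber := sum_Icc_bernoulli'_mul_pow p (j + 1)
  push_cast at hfaulhaber
  rw [hsplit, hfaulhaber, hbinom, sum_range_cast_sub_pow n p j hj]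
  field_simp
  ring

theorem sum_pow_mul_harmonic_rev (n : ℕ) (m : ℤ) (p : ℕ) :
    ∑ k ∈ Finset.range (n + 1), (k : ℚ) ^ p * H (n - k) m
      = H n (-(p : ℤ)) * H n m + (if p = 0 then H n m else 0)
        + (1 / ((p : ℚ) + 1)) * ∑ k ∈ Finset.Icc 1 (p + 1),
            (-1 : ℚ) ^ k * ((p + 1).choose k : ℚ)
              * (bernoulli' (p + 1 - k) + ((p + 1 - k : ℕ) : ℚ) * H n ((k : ℤ) - p))
              * H n (m - k) := by
  have hswap : ∑ k ∈ range (n + 1), (k : ℚ) ^ p * H (n - k) m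
      = ∑ j ∈ range n, ((j : ℚ) + 1) ^ (-m) * ∑ k ∈ range (n - j), (k : ℚ) ^ p :=
    sum_range_mul_sum_range_sub (fun k => (k : ℚ) ^ p) (fun j => ((j : ℚ) + 1) ^ (-m)) n
  have hH : ∑ j ∈ range n, ((j : ℚ) + 1) ^ (-m) = H n m := rfl
  rw [hswap]
  refine (sum_congr rfl fun (j : ℕ) hj => congrArg (((j : ℚ) + 1) ^ (-m) * ·)
    (sum_range_pow_sub_eq_harmonic_poly n p j (mem_range.1 hj))).trans ?_
  simp only [mul_add, sum_add_distrib, mul_left_comm _ (1 / ((p : ℚ) + 1)), ← mul_sum,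
    H.sum_zpow_mul_sum_pow, ← sum_mul, hH, zero_pow_eq]
  split_ifs <;> ring
end

section
/- For every nonnegative integer n, Σ_{k=0}^n k H_{n−k} = (n(n+1)/2) H_{n+1} − (3/4) n(n+1). -/
/-! Write `S n` for the left-hand side. Since `H (m + 1) 1 = H m 1 + 1 / (m + 1)`, the difference
`S (n + 1) - S n` is `∑_{k ≤ n} k / (n + 1 - k)`; reflecting `k ↦ n - k` turns this into
`∑_{j ≤ n} ((n + 1) / (j + 1) - 1) = (n + 1) H_{n+1} - (n + 1)`, and the closed form satisfies the
same recursion. -/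

lemma H_one_succ (n : ℕ) : H (n + 1) 1 = H n 1 + 1 / ((n : ℚ) + 1) := by
  simp [H, Finset.sum_range_succ, zpow_neg]

lemma sum_range_div_sub_add_one (n : ℕ) :
    ∑ k ∈ Finset.range (n + 1), (k : ℚ) / ((n - k : ℕ) + 1)
      = ((n : ℚ) + 1) * H (n + 1) 1 - ((n : ℚ) + 1) := by
  have reflected : ∀ j ∈ Finset.range (n + 1),
      ((n - j : ℕ) : ℚ) / ((n - (n - j) : ℕ) + 1) = ((n : ℚ) + 1) * (1 / ((j : ℚ) + 1)) - 1 := by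
    intro j hj
    have hjn : j ≤ n := Finset.mem_range_succ_iff.mp hj
    rw [Nat.sub_sub_self hjn, Nat.cast_sub hjn]
    field_simp
    ring
  rw [← Finset.sum_range_reflect, Nat.add_sub_cancel, Finset.sum_congr rfl reflected,
    Finset.sum_sub_distrib, ← Finset.mul_sum]
  simp [H, zpow_neg]

lemma sum_mul_H_sub_succ (n : ℕ) :
    ∑ k ∈ Finset.range (n + 2), (k : ℚ) * H (n + 1 - k) 1
      = ∑ k ∈ Finset.range (n + 1), (k : ℚ) * H (n - k) 1
        + ∑ k ∈ Finset.range (n + 1), (k : ℚ) / ((n - k : ℕ) + 1) := by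
  have H_zero : H 0 1 = 0 := Finset.sum_range_zero _
  rw [Finset.sum_range_succ, Nat.sub_self, H_zero, mul_zero, add_zero, ← Finset.sum_add_distrib]
  refine Finset.sum_congr rfl fun k hk => ?_
  rw [Nat.sub_add_comm (Finset.mem_range_succ_iff.mp hk), H_one_succ]
  ring

theorem sum_k_harmonic_rev (n : ℕ) :
    ∑ k ∈ Finset.range (n + 1), (k : ℚ) * H (n - k) 1
      = ((n : ℚ) * ((n : ℚ) + 1) / 2) * H (n + 1) 1 - (3 / 4) * (n : ℚ) * ((n : ℚ) + 1) := by
  induction n with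
  | zero => simp [H]
  | succ n ih =>
    rw [sum_mul_H_sub_succ, ih, sum_range_div_sub_add_one, H_one_succ (n + 1)]
    push_cast
    field_simp
    ring
end

section
/- For every nonnegative integer n, Σ_{k=0}^n k H_{n−k}^{(2)} = (n(n+1)/2) H_{n+1}^{(2)} − ((2n+1)/2) H_{n+1} + (n+1)/2. -/
/-!
Exchanging the order of summation, `∑_{k ≤ n} (n - k) H_k^{(m)} = ½ ∑_{1 ≤ j ≤ n+1} (n+1-j)(n-j) j^{-m}`,
and expanding `(n+1-j)(n-j)` in powers of `j` writes the sum through `H_{n+1}^{(m)}`, `H_{n+1}^{(m-1)}`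
and `H_{n+1}^{(m-2)}`. For `m = 2` the last one is `n + 1`. Reflecting `k ↦ n - k` turns the theorem's sum
into this one.
-/

open Finset

lemma H_zero_order (n : ℕ) : H n 0 = n := by
  simp [H]

lemma zpow_neg_sub_natCast {x : ℚ} (hx : x ≠ 0) (m : ℤ) (j : ℕ) :
    x ^ (-(m - j)) = x ^ j * x ^ (-m) := by
  rw [neg_sub, sub_eq_add_neg, zpow_add₀ hx, zpow_natCast]

lemma sum_range_H (n : ℕ) (m : ℤ) :
    ∑ k ∈ range (n + 1), H k m = ((n : ℚ) + 1) * H (n + 1) m - H (n + 1) (m - 1) := by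
  induction n with
  | zero => simp [H]
  | succ n ih =>
    have hx : ((n : ℚ) + 1 + 1) ≠ 0 := by positivity
    rw [sum_range_succ, ih, H_succ (n + 1) m, H_succ (n + 1) (m - 1),
      show m - 1 = m - (1 : ℕ) by simp, zpow_neg_sub_natCast (by exact_mod_cast hx)]
    push_cast
    ring

lemma two_mul_sum_sub_mul_H (n : ℕ) (m : ℤ) :
    2 * ∑ k ∈ range (n + 1), ((n : ℚ) - k) * H k m
      = (n : ℚ) * (n + 1) * H (n + 1) m - (2 * n + 1) * H (n + 1) (m - 1)
        + H (n + 1) (m - 2) := by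
  induction n with
  | zero => simp [H]
  | succ n ih =>
    have hx : ((n : ℚ) + 1 + 1) ≠ 0 := by positivity
    have split : ∑ k ∈ range (n + 2), ((n + 1 : ℕ) - (k : ℚ)) * H k m
        = ∑ k ∈ range (n + 1), ((n : ℚ) - k) * H k m + ∑ k ∈ range (n + 1), H k m := by
      rw [sum_range_succ, ← sum_add_distrib]
      push_cast
      simp only [sub_self, zero_mul, add_zero]
      exact sum_congr rfl fun k _ => by ring
    rw [split, mul_add, ih, sum_range_H, H_succ (n + 1) m, H_succ (n + 1) (m - 1),
      H_succ (n + 1) (m - 2), show m - 1 = m - (1 : ℕ) by simp,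
      show m - 2 = m - (2 : ℕ) by simp, zpow_neg_sub_natCast (by exact_mod_cast hx),
      zpow_neg_sub_natCast (by exact_mod_cast hx)]
    push_cast
    ring

lemma sum_range_natCast_mul_reflect {R : Type*} [CommRing R] (f : ℕ → R) (n : ℕ) :
    ∑ k ∈ range (n + 1), (k : R) * f (n - k) = ∑ k ∈ range (n + 1), ((n : R) - k) * f k := by
  rw [← sum_range_reflect]
  refine sum_congr rfl fun k hk => ?_
  have hkn : k ≤ n := Nat.lt_succ_iff.mp (mem_range.mp hk)
  rw [Nat.add_sub_cancel, Nat.sub_sub_self hkn, Nat.cast_sub hkn]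

theorem sum_k_harmonic2_rev (n : ℕ) :
    ∑ k ∈ Finset.range (n + 1), (k : ℚ) * H (n - k) 2
      = ((n : ℚ) * ((n : ℚ) + 1) / 2) * H (n + 1) 2
        - ((2 * (n : ℚ) + 1) / 2) * H (n + 1) 1 + ((n : ℚ) + 1) / 2 := by
  have h := two_mul_sum_sub_mul_H n 2
  norm_num [H_zero_order] at h
  rw [sum_range_natCast_mul_reflect (fun j => H j 2)]
  linarith
end

section
/- For every nonnegative integer n, Σ_{k=0}^n k H_{2n−k} = n(2n+1) H_{2n+1} − (n(3n+1)/2) H_n − (5/4) n(n+1). -/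
open Finset

lemma H_one_eq_harmonic (n : ℕ) : H n 1 = harmonic n := by
  simp [H, harmonic, zpow_neg]

lemma sum_range_sub_mul_harmonic (c : ℚ) (m : ℕ) :
    ∑ j ∈ range m, (c - j) * harmonic j
      = (c * m - m * (m - 1) / 2) * harmonic m - c * m + m * (m - 1) / 4 := by
  induction m with
  | zero => simp
  | succ m ih =>
    rw [sum_range_succ, ih, harmonic_succ]
    push_cast
    field_simp
    ring

lemma sum_range_mul_comp_two_mul_sub (f : ℕ → ℚ) (n : ℕ) :
    ∑ k ∈ range (n + 1), (k : ℚ) * f (2 * n - k)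
      = ∑ j ∈ range (2 * n + 1), (2 * (n : ℚ) - j) * f j
        - ∑ j ∈ range n, (2 * (n : ℚ) - j) * f j := by
  rw [← sum_Ico_eq_sub _ (by omega), sum_Ico_eq_sum_range, ← sum_range_reflect]
  refine sum_congr (by congr 1; omega) fun k hk => ?_
  have hkn : k ≤ n := by rw [mem_range] at hk; omega
  rw [show 2 * n - (n + 1 - 1 - k) = n + k by omega, Nat.cast_sub (by omega)]
  push_cast
  ring

theorem sum_k_harmonic_2n_sub (n : ℕ) :
    ∑ k ∈ Finset.range (n + 1), (k : ℚ) * H (2 * n - k) 1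
      = (n : ℚ) * (2 * (n : ℚ) + 1) * H (2 * n + 1) 1
        - ((n : ℚ) * (3 * (n : ℚ) + 1) / 2) * H n 1
        - (5 / 4) * (n : ℚ) * ((n : ℚ) + 1) := by
  simp only [H_one_eq_harmonic]
  rw [sum_range_mul_comp_two_mul_sub, sum_range_sub_mul_harmonic, sum_range_sub_mul_harmonic]
  push_cast
  ring
end
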